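/- A vector b* ∈ ℝ^p minimizes the causally regularized population risk b ↦ E[((Y − Xᵀb) − E[Y − Xᵀb | σ(A)])²] + γ · E[(E[Y − Xᵀb | σ(A)])²] over ℝ^p if and only if b* minimizes the worst-case shift-perturbed risk b ↦ sup { E[(Y^{Mδ} − (X^{Mδ})ᵀ b)²] : δ : Ω → ℝ^r square-integrable, E[ε δᵀ] = 0, γE[AAᵀ] − E[δδᵀ] positive semidefinite } over ℝ^p. -/

import Mathlib

/-! The residual of the system shifted by `M δ` is `w ⬝ ε + u ⬝ δ`, where `w` is the row of
`(I - B)⁻¹` that reads off `Y - Xᵀ b` and `u = Mᵀ w`. When `E[ε δᵀ] = 0` its second moment is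
`E[(w ⬝ ε)²] + uᵀ E[δ δᵀ] u`. Independence of `ε` and `A` gives `E[Y - Xᵀ b | σ(A)] = u ⬝ A`, so
the regularized risk is `E[(w ⬝ ε)²] + γ uᵀ E[A Aᵀ] u`. The constraint `E[δ δᵀ] ⪯ γ E[A Aᵀ]`
bounds the worst-case risk by the same quantity, with equality at `δ = √γ A`. The two objectives
thus coincide for every `b`. -/

open MeasureTheory ProbabilityTheory Matrix

section Moments

variable {Ω ι κ : Type*} [MeasurableSpace Ω] {μ : Measure Ω}

noncomputable def momentMatrix (μ : Measure Ω) (X : Ω → ι → ℝ) (Y : Ω → κ → ℝ) : Matrix ι κ ℝ :=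
  Matrix.of fun i j => ∫ ω, X ω i * Y ω j ∂μ

theorem momentMatrix_smul_smul (X : Ω → ι → ℝ) (Y : Ω → κ → ℝ) (a b : ℝ) :
    momentMatrix μ (fun ω => a • X ω) (fun ω => b • Y ω) = (a * b) • momentMatrix μ X Y := by
  ext i j
  simp only [momentMatrix, of_apply, Pi.smul_apply, smul_eq_mul, Matrix.smul_apply]
  rw [← integral_const_mul]
  congr with ω
  ring

theorem momentMatrix_eq_zero_of_indepFun {X : Ω → ι → ℝ} {Y : Ω → κ → ℝ}
    (hX : Measurable X) (hY : Measurable Y) (hXY : IndepFun X Y μ)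
    (hXmean : ∀ i, ∫ ω, X ω i ∂μ = 0) : momentMatrix μ X Y = 0 := by
  ext i j
  have hind : IndepFun (fun ω => X ω i) (fun ω => Y ω j) μ :=
    hXY.comp (measurable_pi_apply i) (measurable_pi_apply j)
  simpa [momentMatrix, hXmean i] using hind.integral_mul_eq_mul_integral
    ((measurable_pi_apply i).comp hX).aestronglyMeasurable
    ((measurable_pi_apply j).comp hY).aestronglyMeasurable

variable [Fintype ι] [Fintype κ]

theorem memLp_dotProduct {X : Ω → ι → ℝ} (hX : ∀ i, MemLp (fun ω => X ω i) 2 μ) (c : ι → ℝ) :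
    MemLp (fun ω => c ⬝ᵥ X ω) 2 μ :=
  memLp_finsetSum _ fun i _ => (hX i).const_mul (c i)

theorem integral_dotProduct_mul_dotProduct {X : Ω → ι → ℝ} {Y : Ω → κ → ℝ}
    (hX : ∀ i, MemLp (fun ω => X ω i) 2 μ) (hY : ∀ j, MemLp (fun ω => Y ω j) 2 μ)
    (c : ι → ℝ) (d : κ → ℝ) :
    ∫ ω, (c ⬝ᵥ X ω) * (d ⬝ᵥ Y ω) ∂μ = c ⬝ᵥ (momentMatrix μ X Y *ᵥ d) := by
  have hXY : ∀ i j, Integrable (fun ω => c i * d j * (X ω i * Y ω j)) μ := fun i j =>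
    ((hX i).integrable_mul (hY j)).const_mul _
  calc ∫ ω, (c ⬝ᵥ X ω) * (d ⬝ᵥ Y ω) ∂μ
      = ∫ ω, ∑ i, ∑ j, c i * d j * (X ω i * Y ω j) ∂μ := by
        congr 1; ext ω
        simp only [dotProduct, Finset.sum_mul_sum]
        exact Finset.sum_congr rfl fun i _ => Finset.sum_congr rfl fun j _ => by ring
    _ = ∑ i, ∑ j, c i * d j * ∫ ω, X ω i * Y ω j ∂μ := by
        rw [integral_finsetSum _ fun i _ => integrable_finsetSum _ fun j _ => hXY i j]
        refine Finset.sum_congr rfl fun i _ => ?_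
        rw [integral_finsetSum _ fun j _ => hXY i j]
        simp only [integral_const_mul]
    _ = c ⬝ᵥ (momentMatrix μ X Y *ᵥ d) := by
        simp only [dotProduct, mulVec, momentMatrix, of_apply, Finset.mul_sum]
        exact Finset.sum_congr rfl fun i _ => Finset.sum_congr rfl fun j _ => by ring

theorem integral_dotProduct_sq {X : Ω → ι → ℝ} (hX : ∀ i, MemLp (fun ω => X ω i) 2 μ)
    (c : ι → ℝ) : ∫ ω, (c ⬝ᵥ X ω) ^ 2 ∂μ = c ⬝ᵥ (momentMatrix μ X X *ᵥ c) := by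
  simpa only [sq] using integral_dotProduct_mul_dotProduct hX hX c c

theorem integral_sq_dotProduct_add_dotProduct {X : Ω → ι → ℝ} {Y : Ω → κ → ℝ}
    (hX : ∀ i, MemLp (fun ω => X ω i) 2 μ) (hY : ∀ j, MemLp (fun ω => Y ω j) 2 μ)
    (horth : momentMatrix μ X Y = 0) (c : ι → ℝ) (d : κ → ℝ) :
    ∫ ω, (c ⬝ᵥ X ω + d ⬝ᵥ Y ω) ^ 2 ∂μ
      = ∫ ω, (c ⬝ᵥ X ω) ^ 2 ∂μ + d ⬝ᵥ (momentMatrix μ Y Y *ᵥ d) := by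
  have hcX := memLp_dotProduct hX c
  have hdY := memLp_dotProduct hY d
  have hcross : Integrable (fun ω => 2 * ((c ⬝ᵥ X ω) * (d ⬝ᵥ Y ω))) μ :=
    (hcX.integrable_mul hdY).const_mul 2
  have hrest : Integrable (fun ω => 2 * ((c ⬝ᵥ X ω) * (d ⬝ᵥ Y ω)) + (d ⬝ᵥ Y ω) ^ 2) μ :=
    hcross.add hdY.integrable_sq
  have hexpand : ∀ ω, (c ⬝ᵥ X ω + d ⬝ᵥ Y ω) ^ 2
      = (c ⬝ᵥ X ω) ^ 2 + (2 * ((c ⬝ᵥ X ω) * (d ⬝ᵥ Y ω)) + (d ⬝ᵥ Y ω) ^ 2) := fun ω => by ring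
  simp only [hexpand]
  rw [integral_add hcX.integrable_sq hrest,
    integral_add hcross hdY.integrable_sq, integral_const_mul,
    integral_dotProduct_mul_dotProduct hX hY, horth, integral_dotProduct_sq hY]
  simp

theorem condExp_dotProduct_add_dotProduct_ae_eq [IsProbabilityMeasure μ] {X : Ω → ι → ℝ}
    {A : Ω → κ → ℝ} (hX : Measurable X) (hA : Measurable A) (hXA : IndepFun X A μ)
    (hXint : ∀ i, Integrable (fun ω => X ω i) μ) (hXmean : ∀ i, ∫ ω, X ω i ∂μ = 0)
    (hAint : ∀ j, Integrable (fun ω => A ω j) μ) (c : ι → ℝ) (d : κ → ℝ) :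
    μ[fun ω => c ⬝ᵥ X ω + d ⬝ᵥ A ω | MeasurableSpace.comap A inferInstance]
      =ᵐ[μ] fun ω => d ⬝ᵥ A ω := by
  have hcX : Integrable (fun ω => c ⬝ᵥ X ω) μ :=
    integrable_finsetSum _ fun i _ => (hXint i).const_mul (c i)
  have hdA : Integrable (fun ω => d ⬝ᵥ A ω) μ :=
    integrable_finsetSum _ fun j _ => (hAint j).const_mul (d j)
  have hmean : ∫ ω, c ⬝ᵥ X ω ∂μ = 0 := by
    simp only [dotProduct]
    rw [integral_finsetSum _ fun i _ => (hXint i).const_mul (c i)]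
    simp [integral_const_mul, hXmean]
  have hindep : μ[fun ω => c ⬝ᵥ X ω | MeasurableSpace.comap A inferInstance]
      =ᵐ[μ] fun _ => 0 := by
    rw [← hmean]
    refine condExp_indep_eq hX.comap_le hA.comap_le ?_ ((IndepFun_iff_Indep X A μ).mp hXA)
    exact ((by fun_prop : Measurable fun v : ι → ℝ => c ⬝ᵥ v).comp
      (comap_measurable X)).stronglyMeasurable
  have hself : μ[fun ω => d ⬝ᵥ A ω | MeasurableSpace.comap A inferInstance]
      = fun ω => d ⬝ᵥ A ω := by
    refine condExp_of_stronglyMeasurable hA.comap_le ?_ hdA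
    exact ((by fun_prop : Measurable fun v : κ → ℝ => d ⬝ᵥ v).comp
      (comap_measurable A)).stronglyMeasurable
  refine (condExp_add hcX hdA _).trans ?_
  filter_upwards [hindep] with ω hzero
  rw [Pi.add_apply, hzero, hself, zero_add]

theorem isGreatest_perturbedRisk {X : Ω → ι → ℝ} {A : Ω → κ → ℝ}
    (hX : ∀ i, MemLp (fun ω => X ω i) 2 μ) (hA : ∀ j, MemLp (fun ω => A ω j) 2 μ)
    (hXA : momentMatrix μ X A = 0) {γ : ℝ} (hγ : 0 ≤ γ) (c : ι → ℝ) (d : κ → ℝ) :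
    IsGreatest {x : ℝ | ∃ δ : Ω → κ → ℝ, (∀ j, MemLp (fun ω => δ ω j) 2 μ) ∧
        (∀ i j, ∫ ω, X ω i * δ ω j ∂μ = 0) ∧
        (γ • momentMatrix μ A A - momentMatrix μ δ δ).PosSemidef ∧
        x = ∫ ω, (c ⬝ᵥ X ω + d ⬝ᵥ δ ω) ^ 2 ∂μ}
      (∫ ω, (c ⬝ᵥ X ω) ^ 2 ∂μ + γ * (d ⬝ᵥ (momentMatrix μ A A *ᵥ d))) := by
  constructor
  · have hXδ : momentMatrix μ X (fun ω => √γ • A ω) = 0 := by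
      simpa [hXA] using momentMatrix_smul_smul (μ := μ) X A 1 √γ
    have hδδ : momentMatrix μ (fun ω => √γ • A ω) (fun ω => √γ • A ω)
        = γ • momentMatrix μ A A := by
      rw [momentMatrix_smul_smul, Real.mul_self_sqrt hγ]
    have hδ : ∀ j, MemLp (fun ω => (√γ • A ω) j) 2 μ := fun j => (hA j).const_mul √γ
    refine ⟨fun ω => √γ • A ω, hδ, fun i j => ?_, ?_, ?_⟩
    · exact congrFun₂ hXδ i j
    · rw [hδδ, sub_self]
      exact .zero
    · rw [integral_sq_dotProduct_add_dotProduct hX hδ hXδ, hδδ,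
        smul_mulVec, dotProduct_smul, smul_eq_mul]
  · rintro x ⟨δ, hδ, hXδ, hpsd, rfl⟩
    rw [integral_sq_dotProduct_add_dotProduct hX hδ (Matrix.ext hXδ)]
    have hquad := hpsd.dotProduct_mulVec_nonneg d
    simp only [star_trivial, sub_mulVec, dotProduct_sub, smul_mulVec, dotProduct_smul,
      smul_eq_mul, sub_nonneg] at hquad
    linarith

end Moments

theorem sub_sum_mul_eq_dotProduct {n ι R : Type*} [Fintype n] [DecidableEq n] [Fintype ι]
    [CommRing R] (y : n → R) (k : n) (e : ι → n) (b : ι → R) :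
    y k - ∑ i, b i * y (e i) = (Pi.single k 1 - ∑ i, b i • Pi.single (e i) 1) ⬝ᵥ y := by
  simp [sub_dotProduct, sum_dotProduct, smul_dotProduct, single_dotProduct]

/-- A vector `b*` minimizes the causally regularized population risk if and only if it minimizes
the worst-case risk over shift perturbations `v = M δ` with `E[ε δᵀ] = 0` and
`E[δ δᵀ] ⪯ γ E[A Aᵀ]`. -/
theorem anchor_regression_argmin_iff
    {Ω : Type*} [MeasureSpace Ω] [IsProbabilityMeasure (ℙ : Measure Ω)]
    (p q r : ℕ)
    (B : Matrix (Fin (p + 1 + q)) (Fin (p + 1 + q)) ℝ)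
    (M : Matrix (Fin (p + 1 + q)) (Fin r) ℝ)
    (A : Ω → Fin r → ℝ) (ε : Ω → Fin (p + 1 + q) → ℝ)
    (hAmeas : Measurable A) (hεmeas : Measurable ε)
    (hA2 : ∀ j, MemLp (fun ω => A ω j) 2 ℙ)
    (hε2 : ∀ i, MemLp (fun ω => ε ω i) 2 ℙ)
    (hεmean : ∀ i, ∫ ω, ε ω i ∂ℙ = 0)
    (hIndep : IndepFun ε A ℙ)
    (γ : ℝ) (hγ : 0 ≤ γ)
    -- residual `Y^v - (X^v)ᵀ b` of the shift-perturbed system `Z^v = (I-B)⁻¹ (ε + v)`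
    (res : (Fin p → ℝ) → (Ω → Fin (p + 1 + q) → ℝ) → Ω → ℝ)
    (hres : ∀ b v ω, res b v ω =
      (1 - B)⁻¹.mulVec (ε ω + v ω) ⟨p, by omega⟩
        - ∑ i : Fin p, b i * (1 - B)⁻¹.mulVec (ε ω + v ω) (Fin.castLE (by omega) i))
    -- conditional expectation `E[Y - Xᵀ b | σ(A)]` for the unperturbed system (`v = M A`)
    (g : (Fin p → ℝ) → Ω → ℝ)
    (hg : ∀ b, g b = (ℙ : Measure Ω)[res b (fun ω => M.mulVec (A ω)) |
        MeasurableSpace.comap A inferInstance])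
    -- the causally regularized population risk
    (regRisk : (Fin p → ℝ) → ℝ)
    (hregRisk : ∀ b, regRisk b =
      ∫ ω, (res b (fun ω' => M.mulVec (A ω')) ω - g b ω) ^ 2 ∂ℙ
        + γ * ∫ ω, (g b ω) ^ 2 ∂ℙ)
    -- the worst-case risk over admissible shift perturbations
    (worstRisk : (Fin p → ℝ) → ℝ)
    (hworstRisk : ∀ b, worstRisk b = sSup {x : ℝ | ∃ δ : Ω → Fin r → ℝ,
      (∀ j, MemLp (fun ω => δ ω j) 2 ℙ) ∧
      (∀ i j, ∫ ω, ε ω i * δ ω j ∂ℙ = 0) ∧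
      (γ • (Matrix.of fun i j => ∫ ω, A ω i * A ω j ∂ℙ)
        - Matrix.of fun i j => ∫ ω, δ ω i * δ ω j ∂ℙ).PosSemidef ∧
      x = ∫ ω, (res b (fun ω' => M.mulVec (δ ω')) ω) ^ 2 ∂ℙ}) :
    ∀ bstar : Fin p → ℝ,
      (∀ b, regRisk bstar ≤ regRisk b) ↔ (∀ b, worstRisk bstar ≤ worstRisk b) := by
  suffices hEq : ∀ b, worstRisk b = regRisk b by
    intro bstar
    simp only [hEq]
  intro b
  set w := (Pi.single ⟨p, by omega⟩ 1
    - ∑ i : Fin p, b i • Pi.single (Fin.castLE (by omega) i) 1) ᵥ* (1 - B)⁻¹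
  set u := w ᵥ* M
  have hres' : ∀ δ : Ω → Fin r → ℝ,
      res b (fun ω => M *ᵥ δ ω) = fun ω => w ⬝ᵥ ε ω + u ⬝ᵥ δ ω := by
    intro δ
    funext ω
    rw [hres, sub_sum_mul_eq_dotProduct, dotProduct_mulVec, dotProduct_add, dotProduct_mulVec]
  have hcond : g b =ᵐ[ℙ] fun ω => u ⬝ᵥ A ω := by
    rw [hg, hres']
    exact condExp_dotProduct_add_dotProduct_ae_eq hεmeas hAmeas hIndep
      (fun i => (hε2 i).integrable one_le_two) hεmean (fun j => (hA2 j).integrable one_le_two) w u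
  have hreg : regRisk b = ∫ ω, (w ⬝ᵥ ε ω) ^ 2 ∂ℙ + γ * (u ⬝ᵥ (momentMatrix ℙ A A *ᵥ u)) := by
    rw [hregRisk, hres', ← integral_dotProduct_sq hA2]
    congr 1
    · exact integral_congr_ae (hcond.mono fun ω hω => by simp only [hω, add_sub_cancel_right])
    · exact congrArg _ (integral_congr_ae (hcond.mono fun ω hω => congrArg (· ^ 2) hω))
  rw [hworstRisk, hreg]
  simp only [hres']
  exact (isGreatest_perturbedRisk hε2 hA2
    (momentMatrix_eq_zero_of_indepFun hεmeas hAmeas hIndep hεmean) hγ w u).csSup_eq
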